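/- Let S be a 4×4 symmetric unitary complex matrix representing the conjugation θ(v) = S·conj(v) on ℂ²⊗ℂ² ≅ ℂ⁴. For every eigenframe (v_j)_{j∈J} of θ, the average concurrence satisfies ∑_{j∈J} |v_jᵀ·(σY⊗σY)·v_j| ≥ |tr(M⋆·S·conj(M))|. -/

import Mathlib

open Matrix Kronecker

noncomputable section

/-- First qubit index of a two-qubit (Fin 4) index. -/
def q1 (i : Fin 4) : Fin 2 := ⟨i.val / 2, by have := i.isLt; omega⟩
/-- Second qubit index of a two-qubit (Fin 4) index. -/
def q2 (i : Fin 4) : Fin 2 := ⟨i.val % 2, by have := i.isLt; omega⟩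

/-- Kronecker product of two 2×2 matrices as a 4×4 matrix (row-major / computational
basis ordering 00, 01, 10, 11). -/
def kron2 (A B : Matrix (Fin 2) (Fin 2) ℂ) : Matrix (Fin 4) (Fin 4) ℂ :=
  Matrix.of fun i j => A (q1 i) (q1 j) * B (q2 i) (q2 j)

/-- The magic-basis change matrix M. -/
def magicM : Matrix (Fin 4) (Fin 4) ℂ :=
  ((Real.sqrt 2 : ℂ))⁻¹ • !![1, Complex.I, 0, 0; 0, 0, Complex.I, 1;
    0, 0, Complex.I, -1; 1, -Complex.I, 0, 0]

/-- T = M⋆ · S · conj(M). -/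
def mbT (S : Matrix (Fin 4) (Fin 4) ℂ) : Matrix (Fin 4) (Fin 4) ℂ :=
  magicMᴴ * S * magicM.map (starRingEnd ℂ)

def sigmaX : Matrix (Fin 2) (Fin 2) ℂ := !![0, 1; 1, 0]
def sigmaY : Matrix (Fin 2) (Fin 2) ℂ := !![0, -Complex.I; Complex.I, 0]
def sigmaZ : Matrix (Fin 2) (Fin 2) ℂ := !![1, 0; 0, -1]

/-- σY ⊗ σY as a 4×4 matrix. -/
def sYY : Matrix (Fin 4) (Fin 4) ℂ := kron2 sigmaY sigmaY

lemma sYY_eq : sYY = !![0,0,0,-1; 0,0,1,0; 0,1,0,0; -1,0,0,0] := by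
  ext i j
  fin_cases i <;> fin_cases j <;>
    simp [sYY, kron2, sigmaY, show q1 0 = 0 from rfl, show q1 1 = 0 from rfl,
      show q1 2 = 1 from rfl, show q1 3 = 1 from rfl, show q2 0 = 0 from rfl,
      show q2 1 = 1 from rfl, show q2 2 = 0 from rfl, show q2 3 = 1 from rfl,
      Matrix.vecHead, Matrix.vecTail, Complex.ext_iff]

lemma magic_key : magicM.map (starRingEnd ℂ) * magicMᴴ = -sYY := by
  have hsq : ((Real.sqrt 2 : ℝ) : ℂ) ^ 2 = 2 := by
    norm_cast; rw [Real.sq_sqrt] <;> norm_num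
  rw [sYY_eq]
  ext i j
  fin_cases i <;> fin_cases j <;>
    simp [magicM, Matrix.mul_apply, Fin.sum_univ_four, Matrix.conjTranspose_apply,
      Matrix.map_apply, Matrix.vecHead, Matrix.vecTail] <;>
    ring_nf <;> simp [hsq, Complex.ext_iff] <;> norm_num

lemma trace_mul_vecMulVec (A : Matrix (Fin 4) (Fin 4) ℂ) (x y : Fin 4 → ℂ) :
    (A * vecMulVec x y).trace = y ⬝ᵥ A.mulVec x := by
  simp [Matrix.trace, Matrix.diag, Matrix.mul_apply, Matrix.vecMulVec_apply,
    dotProduct, Matrix.mulVec, Finset.mul_sum]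
  exact Finset.sum_congr rfl fun i _ => Finset.sum_congr rfl fun k _ => by ring

theorem stmt12 (S : Matrix (Fin 4) (Fin 4) ℂ) (hs : Sᵀ = S) (hu : Sᴴ * S = 1)
    (n : ℕ) (v : Fin n → Fin 4 → ℂ)
    (hframe : ∑ j, vecMulVec (v j) (star (v j)) = 1)
    (heig : ∀ j, v j ≠ 0 → ∃ c : ℂ, S.mulVec (star (v j)) = c • v j) :
    ‖(mbT S).trace‖ ≤ ∑ j, ‖v j ⬝ᵥ sYY.mulVec (v j)‖ := by
  have htr : (mbT S).trace = -((S * sYY).trace) := by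
    rw [mbT, Matrix.trace_mul_cycle, magic_key]
    rw [Matrix.neg_mul, Matrix.trace_neg, Matrix.trace_mul_comm]
  have hexp : (S * sYY).trace = ∑ j, star (v j) ⬝ᵥ (S * sYY).mulVec (v j) := by
    calc (S * sYY).trace = (S * sYY * ∑ j, vecMulVec (v j) (star (v j))).trace := by
          rw [hframe, mul_one]
      _ = ∑ j, (S * sYY * vecMulVec (v j) (star (v j))).trace := by
          rw [Finset.mul_sum, Matrix.trace_sum]
      _ = _ := Finset.sum_congr rfl fun j _ => trace_mul_vecMulVec _ _ _
  have hterm : ∀ j, ‖star (v j) ⬝ᵥ (S * sYY).mulVec (v j)‖ ≤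
      ‖v j ⬝ᵥ sYY.mulVec (v j)‖ := by
    intro j
    by_cases hv : v j = 0
    · simp [hv]
    · obtain ⟨c, hc⟩ := heig j hv
      have hvm : Matrix.vecMul (star (v j)) S = c • v j := by
        rw [← hs, Matrix.vecMul_transpose, hc]
      have h1 : star (v j) ⬝ᵥ (S * sYY).mulVec (v j)
          = c * (v j ⬝ᵥ sYY.mulVec (v j)) := by
        rw [← Matrix.mulVec_mulVec, Matrix.dotProduct_mulVec, hvm]
        simp [smul_eq_mul, smul_dotProduct]
      have hnorm : star (S.mulVec (star (v j))) ⬝ᵥ S.mulVec (star (v j))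
          = star (star (v j)) ⬝ᵥ star (v j) := by
        rw [Matrix.star_mulVec, Matrix.dotProduct_mulVec, Matrix.vecMul_vecMul, hu,
          Matrix.vecMul_one]
      rw [hc] at hnorm
      have hdd : star (v j) ⬝ᵥ v j = ((∑ i, Complex.normSq (v j i) : ℝ) : ℂ) := by
        simp [dotProduct, Complex.normSq_eq_conj_mul_self]
      have hd : star (v j) ⬝ᵥ v j ≠ 0 := by
        rw [hdd]
        norm_cast
        intro h0
        apply hv
        funext i
        have hi : Complex.normSq (v j i) = 0 := by
          have := Finset.sum_eq_zero_iff_of_nonneg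
            (fun i _ => Complex.normSq_nonneg (v j i)) |>.mp h0 i (Finset.mem_univ i)
          exact this
        simpa using Complex.normSq_eq_zero.mp hi
      have hcc : star c * c = 1 := by
        have h2 : star c * c * (star (v j) ⬝ᵥ v j) = 1 * (star (v j) ⬝ᵥ v j) := by
          rw [one_mul]
          calc star c * c * (star (v j) ⬝ᵥ v j)
              = star (c • v j) ⬝ᵥ (c • v j) := by
                simp [smul_eq_mul, smul_dotProduct, dotProduct_smul,
                  star_smul, mul_assoc]
                ring
            _ = star (star (v j)) ⬝ᵥ star (v j) := hnorm
            _ = star (v j) ⬝ᵥ v j := by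
                rw [star_star, dotProduct_comm]
        exact mul_right_cancel₀ hd h2
      have hcabs : ‖c‖ = 1 := by
        have h3 : ‖c‖ * ‖c‖ = 1 := by
          have h := congrArg norm hcc
          simpa [norm_mul, Complex.star_def, Complex.norm_conj] using h
        nlinarith [norm_nonneg c]
      rw [h1, norm_mul, hcabs, one_mul]
  calc ‖(mbT S).trace‖
      = ‖∑ j, star (v j) ⬝ᵥ (S * sYY).mulVec (v j)‖ := by
        rw [htr, norm_neg, hexp]
    _ ≤ ∑ j, ‖star (v j) ⬝ᵥ (S * sYY).mulVec (v j)‖ :=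
        norm_sum_le _ _
    _ ≤ _ := Finset.sum_le_sum fun j _ => hterm j
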